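/- arXiv:math/0103188 — 4 statements merged into one kernel-verified Lean document; each statement's English description precedes it below -/
import Mathlib

section
/- Assume char(K) = 0. Let J be a Borel-fixed monomial ideal in S = K[x_1,...,x_n] with decomposition J = Σ_{j=0}^{α} x_1^j · (I_j · S), where I_j = (J : x_1^j) ∩ K[x_2,...,x_n]. Then α equals the initial degree of J (the smallest degree of a nonzero element of J), I_α = (1), and each I_j is a Borel-fixed monomial ideal of K[x_2,...,x_n]. -/
open MvPolynomial

/-- A monomial ideal: an ideal generated by monomials. -/
def IsMonomialIdeal {K : Type} [Field K] {m : ℕ} (J : Ideal (MvPolynomial (Fin m) K)) : Prop :=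
  ∃ G : Set (Fin m →₀ ℕ), J = Ideal.span ((fun d => (monomial d (1 : K))) '' G)

/-- `d` is the exponent vector of a minimal monomial generator of the monomial ideal `J`. -/
def IsMinGen {K : Type} [Field K] {m : ℕ} (J : Ideal (MvPolynomial (Fin m) K))
    (d : Fin m →₀ ℕ) : Prop :=
  (monomial d (1 : K)) ∈ J ∧
    ∀ i : Fin m, 0 < d i → (monomial (d - Finsupp.single i 1) (1 : K)) ∉ J

/-- Borel-fixed monomial ideal: stable under the moves `m ↦ (x_j/x_i)·m` for `j < i`. -/
def IsBorelFixed {K : Type} [Field K] {m : ℕ} (J : Ideal (MvPolynomial (Fin m) K)) : Prop :=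
  IsMonomialIdeal J ∧
    ∀ d : Fin m →₀ ℕ, (monomial d (1 : K)) ∈ J → ∀ i j : Fin m, j < i → 0 < d i →
      (monomial (d - Finsupp.single i 1 + Finsupp.single j 1) (1 : K)) ∈ J

/-- The inclusion `K[x_2,...,x_{n+1}] → K[x_1,...,x_{n+1}]` (variable index 0 is `x_1`). -/
noncomputable def varShift (K : Type) [Field K] (n : ℕ) :
    MvPolynomial (Fin n) K →ₐ[K] MvPolynomial (Fin (n + 1)) K :=
  rename Fin.succ

/-- `I_j = (J : x_1^j) ∩ K[x_2,...,x_{n+1}]`, an ideal of `T = K[x_2,...,x_{n+1}]`. -/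
noncomputable def sliceIdeal {K : Type} [Field K] {n : ℕ}
    (J : Ideal (MvPolynomial (Fin (n + 1)) K)) (j : ℕ) : Ideal (MvPolynomial (Fin n) K) :=
  Ideal.comap (varShift K n) (J.colon (Ideal.span {(X 0 : MvPolynomial (Fin (n + 1)) K) ^ j}))

/-- The Hilbert function of `S/J`: the `K`-dimension of the degree `s` part. -/
noncomputable def hilb {K : Type} [Field K] {m : ℕ}
    (J : Ideal (MvPolynomial (Fin m) K)) (s : ℕ) : ℕ :=
  Module.finrank K (homogeneousSubmodule (Fin m) K s) -
    Module.finrank K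
      (homogeneousSubmodule (Fin m) K s ⊓ Submodule.restrictScalars K J :
        Submodule K (MvPolynomial (Fin m) K))

/-- A homogeneous ideal (with respect to total degree). -/
def IsHomogeneousIdeal {K : Type} [Field K] {m : ℕ}
    (I : Ideal (MvPolynomial (Fin m) K)) : Prop :=
  ∀ p ∈ I, ∀ k : ℕ, (homogeneousComponent k p) ∈ I

/-- `α` is the initial degree of `J`: the least degree of a nonzero (homogeneous) element. -/
def IsInitialDegree {K : Type} [Field K] {m : ℕ}
    (J : Ideal (MvPolynomial (Fin m) K)) (α : ℕ) : Prop :=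
  IsLeast {k : ℕ | ∃ p ∈ J, p ≠ 0 ∧ MvPolynomial.IsHomogeneous p k} α

/-- The height (codimension) of an ideal: the infimum of heights of primes containing it. -/
noncomputable def idealHeight {R : Type} [CommRing R] (I : Ideal R) : ℕ∞ :=
  ⨅ (P : PrimeSpectrum R) (_ : I ≤ P.asIdeal), Order.height P

/-- `S/J` is Cohen-Macaulay: there is a regular sequence inside the irrelevant maximal
ideal of length equal to the Krull dimension of `S/J`. -/
def IsCMQuotient {K : Type} [Field K] {m : ℕ} (J : Ideal (MvPolynomial (Fin m) K)) : Prop :=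
  ∃ rs : List (MvPolynomial (Fin m) K),
    (∀ f ∈ rs, f ∈ Ideal.span (Set.range (X : Fin m → MvPolynomial (Fin m) K))) ∧
    RingTheory.Sequence.IsRegular (MvPolynomial (Fin m) K ⧸ J) rs ∧
    (rs.length : WithBot ℕ∞) = ringKrullDim (MvPolynomial (Fin m) K ⧸ J)

/-- An unmixed ideal: all associated primes of `R/I` have the same height, namely that of `I`. -/
def IsUnmixed {K : Type} [Field K] {m : ℕ} (I : Ideal (MvPolynomial (Fin m) K)) : Prop :=
  ∀ P ∈ associatedPrimes (MvPolynomial (Fin m) K) (MvPolynomial (Fin m) K ⧸ I),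
    idealHeight P = idealHeight I

/-- Degree-lexicographic order on exponent vectors: `d > e`. -/
def DegLexGT {m : ℕ} (d e : Fin m →₀ ℕ) : Prop :=
  (e.sum fun _ k => k) < (d.sum fun _ k => k) ∨
    ((d.sum fun _ k => k) = (e.sum fun _ k => k) ∧
      ∃ i : Fin m, (∀ k < i, d k = e k) ∧ e i < d i)

/-- A lex-segment monomial ideal. -/
def IsLexSegment {K : Type} [Field K] {m : ℕ} (J : Ideal (MvPolynomial (Fin m) K)) : Prop :=
  IsMonomialIdeal J ∧
    ∀ d e : Fin m →₀ ℕ, (d.sum fun _ k => k) = (e.sum fun _ k => k) →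
      DegLexGT d e → (monomial e (1 : K)) ∈ J → (monomial d (1 : K)) ∈ J

/-- `macaulayBound d a = a^{⟨d⟩}`, the Macaulay upper bound computed from the `d`-th
binomial expansion of `a`. -/
def macaulayBound : ℕ → ℕ → ℕ
  | _, 0 => 0
  | 0, _ + 1 => 0
  | d + 1, a + 1 =>
    let k := Nat.findGreatest (fun k => Nat.choose k (d + 1) ≤ a + 1) (a + d + 2)
    Nat.choose (k + 1) (d + 2) + macaulayBound d (a + 1 - Nat.choose k (d + 1))

/-- The first difference of a numerical function (with `f(-1) = 0`). -/
def delta (f : ℕ → ℤ) : ℕ → ℤ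
  | 0 => f 0
  | n + 1 => f (n + 1) - f n

/-- An O-sequence: `f(0) = 1`, nonnegative, satisfying Macaulay's growth condition. -/
def IsOSequence (f : ℕ → ℤ) : Prop :=
  f 0 = 1 ∧ (∀ t, 0 ≤ f t) ∧ ∀ t, 1 ≤ t → f (t + 1) ≤ (macaulayBound t (f t).toNat : ℤ)


/-!
Borel moves towards `x_1` preserve the degree, so every monomial of degree `k` in a Borel-fixed
ideal `J` forces `x_1^k ∈ J`. Hence the least `k` with `x_1^k ∈ J` is
the initial degree of `J`; `x_1^k` is a minimal generator, and every minimal generator `d` has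
`d_1 ≤ k`, so `k` is the maximal `x_1`-exponent `α` of a minimal generator. The slices
`(J : x_1^j) ∩ K[x_2, …]` are Borel-fixed because colons by monomials and restriction along the
order-preserving inclusion of variables both preserve Borel-fixedness.
-/

open Finsupp (single)

namespace Finsupp

theorem apply_add_apply_le_degree {σ : Type*} [Fintype σ] (d : σ →₀ ℕ) {i j : σ}
    (hij : i ≠ j) : d i + d j ≤ d.degree := by
  classical
  rw [degree_eq_sum, ← Finset.sum_pair hij]
  exact Finset.sum_le_sum_of_subset (Finset.subset_univ _)

theorem degree_tsub_single_add_single {σ : Type*} (d : σ →₀ ℕ) {i : σ} (hi : 0 < d i)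
    (j : σ) : (d - single i 1 + single j 1).degree = d.degree := by
  have hsplit : d - single i 1 + single i 1 = d := tsub_add_cancel_of_le (single_le_iff.mpr hi)
  have := congrArg degree hsplit
  simp only [map_add, degree_single] at this ⊢
  omega

end Finsupp

section MonomialIdeal

variable {K : Type} [Field K] {m : ℕ}

theorem monomial_mem_of_le {J : Ideal (MvPolynomial (Fin m) K)} {d e : Fin m →₀ ℕ}
    (he : monomial e (1 : K) ∈ J) (hle : e ≤ d) : monomial d (1 : K) ∈ J := by
  rw [← tsub_add_cancel_of_le hle, ← mul_one (1 : K), ← monomial_mul]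
  exact J.mul_mem_left _ he

theorem isMonomialIdeal_iff {J : Ideal (MvPolynomial (Fin m) K)} :
    IsMonomialIdeal J ↔ ∀ p ∈ J, ∀ d ∈ p.support, monomial d (1 : K) ∈ J := by
  constructor
  · rintro ⟨G, rfl⟩ p hp d hd
    obtain ⟨g, hg, hgd⟩ := mem_ideal_span_monomial_image.mp hp d hd
    exact monomial_mem_of_le (Ideal.subset_span ⟨g, hg, rfl⟩) hgd
  · intro h
    refine ⟨{d | monomial d (1 : K) ∈ J}, le_antisymm (fun p hp => ?_) ?_⟩
    · exact mem_ideal_span_monomial_image.mpr fun d hd => ⟨d, h p hp d hd, le_rfl⟩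
    · rw [Ideal.span_le]
      rintro _ ⟨d, hd, rfl⟩
      exact hd

theorem IsMinGen.apply_le_of_monomial_single_mem {J : Ideal (MvPolynomial (Fin m) K)}
    {d : Fin m →₀ ℕ} (hd : IsMinGen J d) {i : Fin m} {k : ℕ}
    (hk : monomial (single i k) (1 : K) ∈ J) : d i ≤ k := by
  by_contra! h
  refine hd.2 i (by omega) (monomial_mem_of_le hk (Finsupp.single_le_iff.mpr ?_))
  simp only [Finsupp.tsub_apply, Finsupp.single_eq_same]
  omega

theorem isMinGen_single {J : Ideal (MvPolynomial (Fin m) K)} {i : Fin m} {k : ℕ}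
    (hk : monomial (single i k) (1 : K) ∈ J)
    (hmin : ∀ k' < k, monomial (single i k') (1 : K) ∉ J) : IsMinGen J (single i k) := by
  refine ⟨hk, fun i' hi' => ?_⟩
  obtain rfl : i' = i := by
    by_contra h
    rw [Finsupp.single_eq_of_ne h] at hi'
    exact lt_irrefl 0 hi'
  rw [← Finsupp.single_tsub]
  exact hmin _ (by simp only [Finsupp.single_eq_same] at hi'; omega)

namespace IsMonomialIdeal

variable {J : Ideal (MvPolynomial (Fin m) K)}

theorem colon_monomial (hJ : IsMonomialIdeal J) (e : Fin m →₀ ℕ) :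
    IsMonomialIdeal (J.colon (Ideal.span {monomial e (1 : K)})) := by
  rw [isMonomialIdeal_iff] at hJ ⊢
  intro p hp d hd
  rw [Ideal.mem_colon_span_singleton] at hp ⊢
  rw [monomial_mul, one_mul]
  refine hJ _ hp _ ?_
  rw [mem_support_iff, coeff_mul_monomial, mul_one]
  exact mem_support_iff.mp hd

theorem comap_rename (hJ : IsMonomialIdeal J) {m' : ℕ} {f : Fin m' → Fin m}
    (hf : f.Injective) : IsMonomialIdeal (J.comap (rename (R := K) f)) := by
  rw [isMonomialIdeal_iff] at hJ ⊢
  intro p hp d hd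
  rw [Ideal.mem_comap, rename_monomial]
  refine hJ _ hp _ ?_
  rw [mem_support_iff, coeff_rename_mapDomain f hf]
  exact mem_support_iff.mp hd

theorem isInitialDegree (hJ : IsMonomialIdeal J) {e : Fin m →₀ ℕ}
    (he : monomial e (1 : K) ∈ J) (hmin : ∀ d, monomial d (1 : K) ∈ J → e.degree ≤ d.degree) :
    IsInitialDegree J e.degree := by
  refine ⟨⟨_, he, by simp, isHomogeneous_monomial _ rfl⟩, ?_⟩
  rintro k ⟨p, hp, hp0, hhom⟩
  obtain ⟨d, hd⟩ := support_nonempty.mpr hp0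
  have hdeg : d.degree = k := by rw [hhom.degree_eq_sum_deg_support hd, Finsupp.degree_apply]
  exact hdeg ▸ hmin d (isMonomialIdeal_iff.mp hJ p hp d hd)

end IsMonomialIdeal

end MonomialIdeal

section BorelFixed

variable {K : Type} [Field K]

namespace IsBorelFixed

theorem colon_monomial {m : ℕ} {J : Ideal (MvPolynomial (Fin m) K)} (hJ : IsBorelFixed J)
    (e : Fin m →₀ ℕ) : IsBorelFixed (J.colon (Ideal.span {monomial e (1 : K)})) := by
  refine ⟨hJ.1.colon_monomial e, fun d hd i j hji hdi => ?_⟩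
  simp only [Ideal.mem_colon_span_singleton, monomial_mul, one_mul] at hd ⊢
  have hmove := hJ.2 (d + e) hd i j hji (by simp only [Finsupp.add_apply]; omega)
  rwa [add_right_comm, tsub_add_eq_add_tsub (Finsupp.single_le_iff.mpr hdi)]

theorem comap_rename {m m' : ℕ} {J : Ideal (MvPolynomial (Fin m) K)} (hJ : IsBorelFixed J)
    {f : Fin m' → Fin m} (hf : StrictMono f) : IsBorelFixed (J.comap (rename (R := K) f)) := by
  refine ⟨hJ.1.comap_rename hf.injective, fun d hd i j hji hdi => ?_⟩
  rw [Ideal.mem_comap, rename_monomial] at hd ⊢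
  have hdi' : 0 < d.mapDomain f (f i) := by rwa [Finsupp.mapDomain_apply hf.injective]
  have hsplit : d.mapDomain f = (d - single i 1).mapDomain f + single (f i) 1 := by
    rw [← Finsupp.mapDomain_single, ← Finsupp.mapDomain_add,
      tsub_add_cancel_of_le (Finsupp.single_le_iff.mpr hdi)]
  have hmove := hJ.2 _ hd (f i) (f j) (hf hji) hdi'
  rwa [hsplit, add_tsub_cancel_right, ← Finsupp.mapDomain_single, ← Finsupp.mapDomain_add]
    at hmove

variable {n : ℕ} {J : Ideal (MvPolynomial (Fin (n + 1)) K)}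

theorem sliceIdeal (hJ : IsBorelFixed J) (j : ℕ) : IsBorelFixed (sliceIdeal J j) := by
  have h := (hJ.colon_monomial (single 0 j)).comap_rename (Fin.strictMono_succ (n := n))
  rwa [← X_pow_eq_monomial] at h

theorem monomial_single_degree_mem (hJ : IsBorelFixed J) {d : Fin (n + 1) →₀ ℕ}
    (hd : monomial d (1 : K) ∈ J) : monomial (single 0 d.degree) (1 : K) ∈ J := by
  induction hN : d.degree - d 0 using Nat.strong_induction_on generalizing d with
  | _ N ih =>
    by_cases h : ∃ i ≠ 0, 0 < d i
    · obtain ⟨i, hi0, hdi⟩ := h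
      have hdeg := d.degree_tsub_single_add_single hdi 0
      have hlt :
          (d - single i 1 + single 0 1).degree - (d - single i 1 + single 0 1 :) 0 < N := by
        have := d.apply_add_apply_le_degree hi0.symm
        rw [hdeg, Finsupp.add_apply, Finsupp.tsub_apply, Finsupp.single_eq_same,
          Finsupp.single_eq_of_ne hi0.symm]
        omega
      simpa only [hdeg] using ih _ hlt (hJ.2 d hd i 0 (Fin.pos_of_ne_zero hi0) hdi) rfl
    · push Not at h
      have hd0 : d = single 0 (d 0) := by
        ext i
        rcases eq_or_ne i 0 with rfl | hi
        · simp
        · rw [Finsupp.single_eq_of_ne hi]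
          exact Nat.le_zero.mp (h i hi)
      rwa [hd0, Finsupp.degree_single, ← hd0]

end IsBorelFixed

theorem sliceIdeal_eq_top_iff {n : ℕ} {J : Ideal (MvPolynomial (Fin (n + 1)) K)} {j : ℕ} :
    sliceIdeal J j = ⊤ ↔ (X 0 : MvPolynomial (Fin (n + 1)) K) ^ j ∈ J := by
  rw [Ideal.eq_top_iff_one, sliceIdeal, Ideal.mem_comap, map_one, Ideal.mem_colon_span_singleton,
    one_mul]

end BorelFixed

theorem borel_fixed_decomposition_general {K : Type} [Field K] {n : ℕ} (α : ℕ)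
    (J : Ideal (MvPolynomial (Fin (n + 1)) K))
    (hB : IsBorelFixed J)
    (hex : ∃ d, IsMinGen J d ∧ d 0 = α)
    (hmax : ∀ d, IsMinGen J d → d 0 ≤ α) :
    IsInitialDegree J α ∧ sliceIdeal J α = ⊤ ∧
      ∀ j, j ≤ α → IsBorelFixed (sliceIdeal J j) := by
  classical
  obtain ⟨d, hd, rfl⟩ := hex
  have hpow : ∃ k, monomial (single 0 k) (1 : K) ∈ J :=
    ⟨_, hB.monomial_single_degree_mem hd.1⟩
  have hk : monomial (single 0 (Nat.find hpow)) (1 : K) ∈ J := Nat.find_spec hpow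
  have hk_least : ∀ e, monomial e (1 : K) ∈ J → Nat.find hpow ≤ e.degree := fun e he =>
    Nat.find_min' hpow (hB.monomial_single_degree_mem he)
  have hk_eq : Nat.find hpow = d 0 :=
    le_antisymm (by simpa using hmax _ (isMinGen_single hk fun _ => Nat.find_min hpow))
      (hd.apply_le_of_monomial_single_mem hk)
  rw [← hk_eq]
  refine ⟨?_, sliceIdeal_eq_top_iff.mpr (by rwa [X_pow_eq_monomial]), fun j _ => hB.sliceIdeal j⟩
  simpa using hB.1.isInitialDegree hk fun e he => by simpa using hk_least e he

/-- decomposition of a Borel-fixed ideal in characteristic zero. -/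
theorem borel_fixed_decomposition {K : Type} [Field K] [CharZero K] {n : ℕ} (α : ℕ)
    (J : Ideal (MvPolynomial (Fin (n + 1)) K))
    (hB : IsBorelFixed J)
    (hex : ∃ d, IsMinGen J d ∧ d 0 = α)
    (hmax : ∀ d, IsMinGen J d → d 0 ≤ α) :
    IsInitialDegree J α ∧ sliceIdeal J α = ⊤ ∧
      ∀ j, j ≤ α → IsBorelFixed (sliceIdeal J j) :=
  borel_fixed_decomposition_general α J hB hex hmax
end

section
/- Let J be an Artinian monomial ideal or (in characteristic 0) a Borel-fixed monomial ideal in S = K[x_1,...,x_n], with decomposition J = Σ_{j=0}^{α} x_1^j · (I_j · S), I_j = (J : x_1^j) ∩ T. Then h_{S/J}(s) = Σ_{j=0}^{α−1} h_{T/I_j}(s−j) for all s ≥ 0. -/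
open MvPolynomial

/-!
A monomial ideal is spanned, as a vector space, by the monomials it contains, so `h_{S/J}(s)`
counts the exponents of degree `s` whose monomial lies outside `J`. Sorting them by their
`x_1`-exponent `j`, the fibre over `j` is in bijection, through `e ↦ (j, e)`, with the exponents
of degree `s - j` outside `I_j`. In both cases `x_1^α ∈ J`, so only `j < α` occurs: the least
pure power of `x_1` in `J` is a minimal generator, hence has exponent at most `α`, and it exists
because `S/J` is Artinian, resp. because Borel moves push any generator onto `x_1`.
-/

open scoped Finset

theorem Finsupp.mapDomain_succ_add_single_zero {M : Type} [AddCommMonoid M] {n : ℕ}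
    (e : Fin n →₀ M) (y : M) :
    e.mapDomain Fin.succ + Finsupp.single 0 y = Finsupp.cons y e := by
  ext i
  refine Fin.cases ?_ (fun i => ?_) i
  · rw [Finsupp.add_apply, Finsupp.mapDomain_of_notMem_range _ _ (by simp),
      Finsupp.single_eq_same, zero_add, Finsupp.cons_zero]
  · simp [Finsupp.mapDomain_apply (Fin.succ_injective n)]

theorem Finsupp.degree_cons {n : ℕ} (y : ℕ) (e : Fin n →₀ ℕ) :
    (Finsupp.cons y e).degree = y + e.degree := by
  rw [← Finsupp.mapDomain_succ_add_single_zero, map_add, Finsupp.degree_mapDomain,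
    Finsupp.degree_single, add_comm]

namespace IsMonomialIdeal

variable {K : Type} [Field K] {m : ℕ} {J : Ideal (MvPolynomial (Fin m) K)}

theorem monomial_mem_of_mem_support (hJ : IsMonomialIdeal J) {p : MvPolynomial (Fin m) K}
    (hp : p ∈ J) {d : Fin m →₀ ℕ} (hd : d ∈ p.support) : monomial d (1 : K) ∈ J := by
  obtain ⟨G, rfl⟩ := hJ
  obtain ⟨g, hg, hgd⟩ := mem_ideal_span_monomial_image.mp hp d hd
  exact Ideal.mem_of_dvd _ (monomial_dvd_monomial.mpr ⟨Or.inr hgd, one_dvd _⟩)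
    (Ideal.subset_span ⟨g, hg, rfl⟩)

theorem of_monomial_mem_of_mem_support
    (h : ∀ p ∈ J, ∀ d ∈ p.support, monomial d (1 : K) ∈ J) : IsMonomialIdeal J := by
  refine ⟨{d | monomial d (1 : K) ∈ J}, le_antisymm (fun p hp => ?_) ?_⟩
  · exact mem_ideal_span_monomial_image.mpr fun d hd => ⟨d, h p hp d hd, le_rfl⟩
  · exact Ideal.span_le.mpr (by rintro _ ⟨d, hd, rfl⟩; exact hd)

theorem restrictScalars_eq_supported (hJ : IsMonomialIdeal J) :
    J.restrictScalars K = AddMonoidAlgebra.supported K K {d | monomial d (1 : K) ∈ J} := by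
  refine le_antisymm (fun p hp d hd => hJ.monomial_mem_of_mem_support hp hd) ?_
  rw [AddMonoidAlgebra.supported_eq_span_single, Submodule.span_le]
  rintro _ ⟨d, hd, rfl⟩
  exact hd

end IsMonomialIdeal

section Hilbert

variable {K : Type} [Field K] {m : ℕ}

open Classical in
noncomputable def standardExponents (J : Ideal (MvPolynomial (Fin m) K)) (s : ℕ) :
    Finset (Fin m →₀ ℕ) :=
  {d ∈ (Finsupp.finite_of_degree_eq s).toFinset | monomial d (1 : K) ∉ J}

theorem finrank_supported_finset (F : Finset (Fin m →₀ ℕ)) :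
    Module.finrank K (AddMonoidAlgebra.supported K K (F : Set (Fin m →₀ ℕ))) = #F := by
  rw [(AddMonoidAlgebra.supportedEquivFinsupp _).finrank_eq, Module.finrank_finsupp_self]
  exact Fintype.card_coe F

theorem supported_inf_supported (s t : Set (Fin m →₀ ℕ)) :
    AddMonoidAlgebra.supported K K s ⊓ AddMonoidAlgebra.supported K K t =
      AddMonoidAlgebra.supported K K (s ∩ t) := by
  ext p
  simp only [Submodule.mem_inf, AddMonoidAlgebra.mem_supported, Set.subset_inter_iff]

theorem IsMonomialIdeal.hilb_eq_card_standardExponents {J : Ideal (MvPolynomial (Fin m) K)}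
    (hJ : IsMonomialIdeal J) (s : ℕ) : hilb J s = #(standardExponents J s) := by
  classical
  set D := (Finsupp.finite_of_degree_eq (σ := Fin m) s).toFinset
  have hD : homogeneousSubmodule (Fin m) K s = AddMonoidAlgebra.supported K K (D : Set _) := by
    rw [homogeneousSubmodule_eq_finsupp_supported, Set.Finite.coe_toFinset]
  have hDJ : homogeneousSubmodule (Fin m) K s ⊓ J.restrictScalars K =
      AddMonoidAlgebra.supported K K (D.filter fun d => monomial d (1 : K) ∈ J : Set _) := by
    rw [hD, hJ.restrictScalars_eq_supported, supported_inf_supported, Finset.coe_filter]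
    rfl
  rw [hilb, hDJ, hD, finrank_supported_finset, finrank_supported_finset, standardExponents,
    ← Finset.card_filter_add_card_filter_not (s := D) (p := fun d => monomial d (1 : K) ∈ J),
    add_tsub_cancel_left]

end Hilbert

section Slices

variable {K : Type} [Field K] {n : ℕ} {J : Ideal (MvPolynomial (Fin (n + 1)) K)}

theorem mem_sliceIdeal_iff {j : ℕ} {q : MvPolynomial (Fin n) K} :
    q ∈ sliceIdeal J j ↔ rename Fin.succ q * monomial (Finsupp.single 0 j) (1 : K) ∈ J := by
  rw [sliceIdeal, Ideal.mem_comap, Ideal.mem_colon_span_singleton, X_pow_eq_monomial]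
  rfl

theorem monomial_mem_sliceIdeal_iff {j : ℕ} {e : Fin n →₀ ℕ} :
    monomial e (1 : K) ∈ sliceIdeal J j ↔ monomial (Finsupp.cons j e) (1 : K) ∈ J := by
  rw [mem_sliceIdeal_iff, rename_monomial, monomial_mul, mul_one,
    Finsupp.mapDomain_succ_add_single_zero]

theorem IsMonomialIdeal.sliceIdeal (hJ : IsMonomialIdeal J) (j : ℕ) :
    IsMonomialIdeal (sliceIdeal J j) := by
  refine IsMonomialIdeal.of_monomial_mem_of_mem_support fun q hq e he => ?_
  rw [mem_sliceIdeal_iff] at hq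
  have hcons :
      Finsupp.cons j e ∈ (rename Fin.succ q * monomial (Finsupp.single 0 j) 1).support := by
    rw [mem_support_iff, ← Finsupp.mapDomain_succ_add_single_zero, coeff_mul_monomial,
      coeff_rename_mapDomain _ (Fin.succ_injective n), mul_one]
    exact mem_support_iff.mp he
  exact monomial_mem_sliceIdeal_iff.mpr (hJ.monomial_mem_of_mem_support hq hcons)

end Slices

section Counting

variable {K : Type} [Field K]

theorem mem_standardExponents {m : ℕ} {J : Ideal (MvPolynomial (Fin m) K)} {s : ℕ}
    {d : Fin m →₀ ℕ} :
    d ∈ standardExponents J s ↔ d.degree = s ∧ monomial d (1 : K) ∉ J := by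
  classical
  simp only [standardExponents, Finset.mem_filter, Set.Finite.mem_toFinset, Set.mem_ofPred_eq]

theorem lt_of_X_pow_mem_of_mem_standardExponents {m : ℕ}
    {J : Ideal (MvPolynomial (Fin m) K)} {i : Fin m} {α s : ℕ} (hα : X i ^ α ∈ J)
    {d : Fin m →₀ ℕ} (hd : d ∈ standardExponents J s) : d i < α := by
  by_contra! hle
  refine (mem_standardExponents.mp hd).2 (Ideal.mem_of_dvd _ ?_ hα)
  rw [X_pow_eq_monomial, monomial_dvd_monomial]
  exact ⟨Or.inr (Finsupp.single_le_iff.mpr hle), one_dvd _⟩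

theorem card_standardExponents_filter_eq {n : ℕ} (J : Ideal (MvPolynomial (Fin (n + 1)) K))
    (j s : ℕ) : #{d ∈ standardExponents J s | d 0 = j} =
      if j ≤ s then #(standardExponents (sliceIdeal J j) (s - j)) else 0 := by
  split_ifs with hjs
  · symm
    refine Finset.card_nbij' (Finsupp.cons j) Finsupp.tail (fun e he => ?_) (fun d hd => ?_)
      (fun e _ => Finsupp.tail_cons j e) (fun d hd => ?_)
    · rw [Finset.mem_coe, mem_standardExponents] at he
      rw [Finset.coe_filter, Set.mem_ofPred_eq, mem_standardExponents, Finsupp.degree_cons,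
        ← monomial_mem_sliceIdeal_iff, Finsupp.cons_zero]
      exact ⟨⟨by omega, he.2⟩, rfl⟩
    · rw [Finset.coe_filter, Set.mem_ofPred_eq, mem_standardExponents] at hd
      obtain ⟨⟨hdeg, hdJ⟩, rfl⟩ := hd
      rw [← Finsupp.cons_tail d, Finsupp.degree_cons] at hdeg
      rw [← Finsupp.cons_tail d, ← monomial_mem_sliceIdeal_iff] at hdJ
      rw [Finset.mem_coe, mem_standardExponents]
      exact ⟨by omega, hdJ⟩
    · rw [Finset.coe_filter, Set.mem_ofPred_eq] at hd
      rw [← hd.2, Finsupp.cons_tail]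
  · refine Finset.card_eq_zero.mpr (Finset.filter_eq_empty_iff.mpr fun d hd hd0 => hjs ?_)
    rw [← hd0, ← (mem_standardExponents.mp hd).1]
    exact Finsupp.le_degree 0 d

end Counting

section PurePowers

variable {K : Type} [Field K]

theorem IsMonomialIdeal.exists_X_pow_mem {m : ℕ} {J : Ideal (MvPolynomial (Fin m) K)}
    (hJ : IsMonomialIdeal J) [IsArtinianRing (MvPolynomial (Fin m) K ⧸ J)] (i : Fin m) :
    ∃ k, X i ^ k ∈ J := by
  obtain ⟨k, y, hy⟩ := IsArtinian.exists_pow_succ_smul_dvd (Ideal.Quotient.mk J (X i))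
    (1 : MvPolynomial (Fin m) K ⧸ J)
  obtain ⟨q, rfl⟩ := Ideal.Quotient.mk_surjective y
  -- `X i ^ k` survives in `X i ^ k - X i ^ (k + 1) * q`, a polynomial lying in `J`
  have hmem : X i ^ k - X i ^ (k + 1) * q ∈ J := by
    rw [← Ideal.Quotient.eq, map_mul, map_pow, map_pow]
    simpa using hy.symm
  refine ⟨k, X_pow_eq_monomial (R := K) ▸ hJ.monomial_mem_of_mem_support hmem ?_⟩
  rw [mem_support_iff, coeff_sub, X_pow_eq_monomial, coeff_monomial, if_pos rfl,
    X_pow_eq_monomial, coeff_monomial_mul', if_neg (by simp)]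
  simp

end PurePowers

section Borel

variable {K : Type} [Field K] {n : ℕ} {J : Ideal (MvPolynomial (Fin (n + 1)) K)}

theorem IsBorelFixed.monomial_cons_succ_mem (hB : IsBorelFixed J) {a : ℕ} {t : Fin n →₀ ℕ}
    (ht : monomial (Finsupp.cons a t) (1 : K) ∈ J) {i : Fin n} (hi : 0 < t i) :
    monomial (Finsupp.cons (a + 1) (t - Finsupp.single i 1)) (1 : K) ∈ J := by
  have hcons : Finsupp.cons (a + 1) (t - Finsupp.single i 1) =
      Finsupp.cons a t - Finsupp.single i.succ 1 + Finsupp.single 0 1 := by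
    ext k
    refine Fin.cases ?_ (fun k => ?_) k
    · simp
    · simp [Finsupp.single_apply, Fin.succ_ne_zero]
  rw [hcons]
  exact hB.2 _ ht i.succ 0 (Fin.succ_pos i) (by rwa [Finsupp.cons_succ])

theorem IsBorelFixed.X_zero_pow_mem_of_monomial_cons_mem (hB : IsBorelFixed J) {a : ℕ}
    {t : Fin n →₀ ℕ} (ht : monomial (Finsupp.cons a t) (1 : K) ∈ J) :
    X 0 ^ (a + t.degree) ∈ J := by
  induction hk : t.degree generalizing a t with
  | zero =>
    rw [Finsupp.degree_eq_zero_iff] at hk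
    rw [add_zero]
    rwa [hk, Finsupp.cons_zero_eq_single_zero, ← X_pow_eq_monomial] at ht
  | succ k ih =>
    obtain ⟨i, hi⟩ : ∃ i, t i ≠ 0 := by
      by_contra! h
      simp [show t = 0 from Finsupp.ext h] at hk
    have hle : Finsupp.single i 1 ≤ t := Finsupp.single_le_iff.mpr (Nat.pos_of_ne_zero hi)
    have hdeg : (t - Finsupp.single i 1).degree = k := by
      have := congrArg Finsupp.degree (tsub_add_cancel_of_le hle)
      rw [map_add, Finsupp.degree_single] at this
      omega
    have := ih (hB.monomial_cons_succ_mem ht (Nat.pos_of_ne_zero hi)) hdeg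
    rwa [add_right_comm, add_assoc] at this

end Borel

section MinimalGenerators

variable {K : Type} [Field K] {m : ℕ} {J : Ideal (MvPolynomial (Fin m) K)} {i : Fin m}

theorem isMinGen_single_s6 {k : ℕ} (hk : X i ^ k ∈ J) (hmin : ∀ l < k, X i ^ l ∉ J) :
    IsMinGen J (Finsupp.single i k) := by
  refine ⟨X_pow_eq_monomial (R := K) ▸ hk, fun j hj => ?_⟩
  obtain rfl : j = i := by
    by_contra hji
    simp [Finsupp.single_eq_of_ne hji] at hj
  rw [Finsupp.single_eq_same] at hj
  rw [← Finsupp.single_tsub, ← X_pow_eq_monomial]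
  exact hmin _ (by omega)

theorem X_pow_mem_of_forall_isMinGen_le {α : ℕ} (hmax : ∀ d, IsMinGen J d → d i ≤ α)
    (h : ∃ k, X i ^ k ∈ J) : X i ^ α ∈ J := by
  classical
  have hle := hmax _ (isMinGen_single_s6 (Nat.find_spec h) fun l hl => Nat.find_min h hl)
  rw [Finsupp.single_eq_same] at hle
  exact Ideal.mem_of_dvd _ (pow_dvd_pow _ hle) (Nat.find_spec h)

end MinimalGenerators

/-- Hilbert function formula in the Artinian or Borel-fixed case. -/
theorem hilbert_function_decomposition' {K : Type} [Field K] {n : ℕ} (α : ℕ)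
    (J : Ideal (MvPolynomial (Fin (n + 1)) K))
    (hJ : IsMonomialIdeal J)
    (hAB : Module.Finite K (MvPolynomial (Fin (n + 1)) K ⧸ J) ∨
      (CharZero K ∧ IsBorelFixed J))
    (hex : ∃ d, IsMinGen J d ∧ d 0 = α)
    (hmax : ∀ d, IsMinGen J d → d 0 ≤ α) :
    ∀ s : ℕ, hilb J s =
      ∑ j ∈ Finset.range α, if j ≤ s then hilb (sliceIdeal J j) (s - j) else 0 := by
  have hα : X 0 ^ α ∈ J := by
    refine X_pow_mem_of_forall_isMinGen_le hmax ?_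
    rcases hAB with hfin | ⟨-, hB⟩
    · have := IsArtinianRing.of_finite K (MvPolynomial (Fin (n + 1)) K ⧸ J)
      exact hJ.exists_X_pow_mem 0
    · obtain ⟨d, ⟨hd, -⟩, -⟩ := hex
      rw [← Finsupp.cons_tail d] at hd
      exact ⟨_, hB.X_zero_pow_mem_of_monomial_cons_mem hd⟩
  intro s
  rw [hJ.hilb_eq_card_standardExponents, Finset.card_eq_sum_card_fiberwise
    fun d hd => Finset.mem_range.mpr (lt_of_X_pow_mem_of_mem_standardExponents hα hd)]
  refine Finset.sum_congr rfl fun j _ => ?_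
  rw [card_standardExponents_filter_eq, (hJ.sliceIdeal j).hilb_eq_card_standardExponents]
end

section
/- Let I ⊆ J be homogeneous ideals in R = K[x_0,...,x_n] and let A ∈ R be a homogeneous form of degree d with I : A = I. Then for all t, the Hilbert functions satisfy h_{R/(I + A·J)}(t) = h_{R/I}(t) − h_{R/I}(t−d) + h_{R/J}(t−d). -/
/-! In degree `t ≥ d` the degree-`t` part of `I + A·J` is `I_t + A·J_{t-d}`, and the two
summands meet exactly in `A·I_{t-d}`: `A g ∈ I` forces `g ∈ I` since `A` is a nonzerodivisor on
`R/I`, while `I ⊆ J` gives the reverse inclusion. As multiplication by `A ≠ 0` is injective,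
Grassmann's formula `dim (U + V) + dim (U ∩ V) = dim U + dim V` yields the count. In degree
`t < d` the summand `A·J` contributes nothing, and if `A = 0` the colon hypothesis forces
`I = J = R`. -/

open MvPolynomial

namespace MvPolynomial

attribute [local instance] gradedAlgebra in
theorem homogeneousComponent_mul_of_isHomogeneous {σ R : Type*} [CommSemiring R]
    {A : MvPolynomial σ R} {d : ℕ} (hA : A.IsHomogeneous d) (g : MvPolynomial σ R) (t : ℕ) :
    homogeneousComponent t (A * g) = if d ≤ t then A * homogeneousComponent (t - d) g else 0 := by
  simpa only [← decomposition.decompose'_apply, DirectSum.Decomposition.decompose'_eq] using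
    DirectSum.coe_decompose_mul_of_left_mem (homogeneousSubmodule σ R) t (b := g) hA

end MvPolynomial

section DegreePart

open Module

variable {K : Type} [Field K] {m d t : ℕ}

instance (σ : Type*) [Finite σ] (t : ℕ) :
    FiniteDimensional K (homogeneousSubmodule σ K t) :=
  Module.Finite.iff_fg.2 (homogeneousSubmodule_fg _ _ t)

noncomputable def Ideal.degreePart (I : Ideal (MvPolynomial (Fin m) K)) (t : ℕ) :
    Submodule K (MvPolynomial (Fin m) K) :=
  homogeneousSubmodule (Fin m) K t ⊓ I.restrictScalars K

namespace Ideal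

variable {I J : Ideal (MvPolynomial (Fin m) K)} {A : MvPolynomial (Fin m) K}

instance (I : Ideal (MvPolynomial (Fin m) K)) (t : ℕ) : FiniteDimensional K (I.degreePart t) :=
  Submodule.finiteDimensional_of_le inf_le_left

theorem degreePart_top (t : ℕ) :
    (⊤ : Ideal (MvPolynomial (Fin m) K)).degreePart t = homogeneousSubmodule (Fin m) K t := by
  simp [degreePart]

theorem degreePart_sup (hI : IsHomogeneousIdeal I) (hJ : IsHomogeneousIdeal J) (t : ℕ) :
    (I ⊔ J).degreePart t = I.degreePart t ⊔ J.degreePart t := by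
  refine le_antisymm ?_ (sup_le (inf_le_inf_left _ ?_) (inf_le_inf_left _ ?_))
  · rintro p ⟨hp, hpIJ⟩
    obtain ⟨q, hq, r, hr, rfl⟩ := Submodule.mem_sup.1 hpIJ
    rw [← homogeneousComponent_eq_self hp, map_add]
    exact Submodule.add_mem_sup ⟨homogeneousComponent_mem t q, hI q hq t⟩
      ⟨homogeneousComponent_mem t r, hJ r hr t⟩
  · exact Submodule.restrictScalars_mono K le_sup_left
  · exact Submodule.restrictScalars_mono K le_sup_right

theorem isHomogeneousIdeal_span_singleton_mul (hA : A.IsHomogeneous d)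
    (hJ : IsHomogeneousIdeal J) : IsHomogeneousIdeal (span {A} * J) := by
  rintro _ hp k
  obtain ⟨g, hg, rfl⟩ := mem_span_singleton_mul.1 hp
  rw [homogeneousComponent_mul_of_isHomogeneous hA]
  split_ifs
  · exact mul_mem_mul (mem_span_singleton_self A) (hJ g hg _)
  · exact zero_mem _

theorem degreePart_span_singleton_mul_of_le (hA : A.IsHomogeneous d)
    (hJ : IsHomogeneousIdeal J) (hd : d ≤ t) :
    (span {A} * J).degreePart t = (J.degreePart (t - d)).map (LinearMap.mulLeft K A) := by
  apply le_antisymm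
  · rintro _ ⟨hp, hpJ⟩
    obtain ⟨g, hg, rfl⟩ := mem_span_singleton_mul.1 hpJ
    rw [← homogeneousComponent_eq_self hp, homogeneousComponent_mul_of_isHomogeneous hA,
      if_pos hd]
    exact Submodule.mem_map_of_mem ⟨homogeneousComponent_mem _ g, hJ g hg _⟩
  · rintro _ ⟨g, ⟨hg, hgJ⟩, rfl⟩
    refine ⟨?_, mem_span_singleton_mul.2 ⟨g, hgJ, rfl⟩⟩
    exact Nat.add_sub_cancel' hd ▸ hA.mul hg

theorem degreePart_span_singleton_mul_of_lt (hA : A.IsHomogeneous d) (ht : t < d) :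
    (span {A} * J).degreePart t = ⊥ := by
  refine eq_bot_iff.2 fun p ⟨hp, hpJ⟩ ↦ ?_
  obtain ⟨g, -, rfl⟩ := mem_span_singleton_mul.1 hpJ
  rw [← homogeneousComponent_eq_self hp, homogeneousComponent_mul_of_isHomogeneous hA,
    if_neg (by omega)]
  exact zero_mem _

theorem degreePart_inf_map_mulLeft (hIJ : I ≤ J) (hcol : I.colon (span {A}) = I)
    (hA : A.IsHomogeneous d) (hd : d ≤ t) :
    I.degreePart t ⊓ (J.degreePart (t - d)).map (LinearMap.mulLeft K A) =
      (I.degreePart (t - d)).map (LinearMap.mulLeft K A) := by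
  apply le_antisymm
  · rintro _ ⟨⟨-, hgI⟩, g, ⟨hg, -⟩, rfl⟩
    refine Submodule.mem_map_of_mem ⟨hg, ?_⟩
    rw [← hcol]
    exact Submodule.mem_colon_span_singleton.2 (by rw [smul_eq_mul, mul_comm]; exact hgI)
  · rintro _ ⟨g, ⟨hg, hgI⟩, rfl⟩
    refine ⟨⟨?_, I.mul_mem_left A hgI⟩, Submodule.mem_map_of_mem ⟨hg, hIJ hgI⟩⟩
    exact Nat.add_sub_cancel' hd ▸ hA.mul hg

theorem finrank_degreePart_sup_span_singleton_mul (hI : IsHomogeneousIdeal I)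
    (hJ : IsHomogeneousIdeal J) (hIJ : I ≤ J) (hcol : I.colon (span {A}) = I)
    (hA : A.IsHomogeneous d) (hA0 : A ≠ 0) (hd : d ≤ t) :
    finrank K ((I ⊔ span {A} * J).degreePart t) + finrank K (I.degreePart (t - d)) =
      finrank K (I.degreePart t) + finrank K (J.degreePart (t - d)) := by
  have finrank_map (V : Submodule K (MvPolynomial (Fin m) K)) :
      finrank K (V.map (LinearMap.mulLeft K A)) = finrank K V :=
    (Submodule.equivMapOfInjective _ (mul_right_injective₀ hA0) V).finrank_eq.symm
  rw [degreePart_sup hI (isHomogeneousIdeal_span_singleton_mul hA hJ),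
    degreePart_span_singleton_mul_of_le hA hJ hd, ← finrank_map (I.degreePart _),
    ← degreePart_inf_map_mulLeft hIJ hcol hA hd, Submodule.finrank_sup_add_finrank_inf_eq,
    finrank_map]

end Ideal

theorem hilb_eq_finrank_sub (I : Ideal (MvPolynomial (Fin m) K)) (t : ℕ) :
    (hilb I t : ℤ) = finrank K (homogeneousSubmodule (Fin m) K t) -
      finrank K (I.degreePart t) := by
  rw [hilb, Nat.cast_sub (Submodule.finrank_mono inf_le_left)]
  rfl

theorem hilb_top (t : ℕ) : hilb (⊤ : Ideal (MvPolynomial (Fin m) K)) t = 0 := by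
  have := hilb_eq_finrank_sub (⊤ : Ideal (MvPolynomial (Fin m) K)) t
  rw [Ideal.degreePart_top, sub_self] at this
  exact_mod_cast this

end DegreePart

/-- Hilbert function of a basic double G-link. -/
theorem basic_double_link_hilbert {K : Type} [Field K] {n d : ℕ}
    (I J : Ideal (MvPolynomial (Fin (n + 1)) K))
    (hI : IsHomogeneousIdeal I) (hJ : IsHomogeneousIdeal J) (hIJ : I ≤ J)
    (A : MvPolynomial (Fin (n + 1)) K)
    (hA : A ∈ homogeneousSubmodule (Fin (n + 1)) K d)
    (hcol : I.colon (Ideal.span {A}) = I) :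
    ∀ t : ℕ, (hilb (I ⊔ Ideal.span {A} * J) t : ℤ) =
      (hilb I t : ℤ) - (if d ≤ t then (hilb I (t - d) : ℤ) else 0) +
        (if d ≤ t then (hilb J (t - d) : ℤ) else 0) := by
  intro t
  by_cases hItop : I = ⊤
  · obtain rfl : J = ⊤ := top_unique (hItop ▸ hIJ)
    simp [hItop, hilb_top]
  have hA0 : A ≠ 0 := by
    rintro rfl
    exact hItop (by simpa [Submodule.colon_singleton_zero] using hcol.symm)
  simp only [hilb_eq_finrank_sub]
  split_ifs with hd
  · have := Ideal.finrank_degreePart_sup_span_singleton_mul hI hJ hIJ hcol hA hA0 hd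
    omega
  · rw [Ideal.degreePart_sup hI (Ideal.isHomogeneousIdeal_span_singleton_mul hA hJ),
      Ideal.degreePart_span_singleton_mul_of_lt hA (not_le.1 hd), sup_bot_eq]
    ring
end

section
/- Let I ⊆ J be homogeneous ideals in R defining schemes W ⊂ V ⊂ P^n with codim W = codim V + 1, and let A be a form of degree d with I : A = I. Then deg(I + A·J) = d · deg I + deg J, where deg denotes the degree (multiplicity) of the corresponding scheme. -/
open MvPolynomial

section AuxBDL

open Polynomial Filter

private lemma aux_poly_eq_zero (P : Polynomial ℚ) (N : ℕ)
    (h : ∀ t : ℕ, N ≤ t → P.eval (t : ℚ) = 0) : P = 0 := by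
  apply Polynomial.eq_zero_of_infinite_isRoot
  have h1 : (Set.Ici N).Infinite := Set.Ici_infinite N
  have h2 : ((fun t : ℕ => (t : ℚ)) '' Set.Ici N).Infinite :=
    h1.image (Function.Injective.injOn Nat.cast_injective)
  refine h2.mono ?_
  rintro x ⟨t, ht, rfl⟩
  exact h t ht

private lemma aux_pos_lead (P : Polynomial ℚ) (hP : P ≠ 0) (N : ℕ)
    (h : ∀ t : ℕ, N ≤ t → 0 ≤ P.eval (t : ℚ)) : 0 < P.leadingCoeff := by
  rcases lt_trichotomy P.leadingCoeff 0 with hlt | heq | hgt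
  · exfalso
    rcases le_or_gt P.degree 0 with hdeg | hdeg
    · have hC : P = Polynomial.C (P.coeff 0) := Polynomial.eq_C_of_degree_le_zero hdeg
      have hl : P.leadingCoeff = P.coeff 0 := by
        rw [Polynomial.leadingCoeff, Polynomial.natDegree_eq_zero_iff_degree_le_zero.mpr hdeg]
      have h0 := h N le_rfl
      rw [hC, Polynomial.eval_C] at h0
      rw [hl] at hlt
      linarith
    · have ht : Tendsto (fun x : ℚ => Polynomial.eval x P) atTop atBot :=
        P.tendsto_atBot_of_leadingCoeff_nonpos hdeg hlt.le
      have ht2 : Tendsto (fun t : ℕ => Polynomial.eval (t : ℚ) P) atTop atBot :=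
        ht.comp tendsto_natCast_atTop_atTop
      obtain ⟨t, h1, h2⟩ :=
        ((ht2.eventually (eventually_le_atBot (-1))).and (eventually_ge_atTop N)).exists
      have := h t h2
      linarith
  · exact absurd (Polynomial.leadingCoeff_eq_zero.mp heq) hP
  · exact hgt

private lemma aux_coeff_comp (P : Polynomial ℚ) (c : ℚ) (k : ℕ) :
    (P.comp (Polynomial.X - Polynomial.C c)).coeff k =
      ∑ i ∈ Finset.range (P.natDegree + 1),
        P.coeff i * ((-c) ^ (i - k) * (i.choose k : ℚ)) := by
  rw [Polynomial.comp_eq_sum_left,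
    Polynomial.sum_over_range' P (fun n => by simp) (P.natDegree + 1)
      (Nat.lt_succ_self P.natDegree),
    Polynomial.finset_sum_coeff]
  refine Finset.sum_congr rfl fun i _ => ?_
  rw [Polynomial.coeff_C_mul, sub_eq_add_neg, ← Polynomial.C_neg, Polynomial.coeff_X_add_C_pow]

private lemma aux_hs_fd {K : Type} [Field K] {m t : ℕ} :
    FiniteDimensional K (homogeneousSubmodule (Fin m) K t) := by
  have hle : homogeneousSubmodule (Fin m) K t ≤ MvPolynomial.restrictTotalDegree (Fin m) K t := by
    intro p hp
    rw [MvPolynomial.mem_restrictTotalDegree]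
    exact MvPolynomial.IsHomogeneous.totalDegree_le ((mem_homogeneousSubmodule _ _).mp hp)
  exact Submodule.finiteDimensional_of_le hle

private lemma aux_hc_mul {K : Type} [Field K] {m : ℕ} (A z : MvPolynomial (Fin m) K) {d : ℕ}
    (hA : A.IsHomogeneous d) (s : ℕ) :
    homogeneousComponent (s + d) (A * z) = A * homogeneousComponent s z := by
  conv_lhs => rw [← sum_homogeneousComponent z, Finset.mul_sum, map_sum]
  have key : ∀ i : ℕ, homogeneousComponent (s + d) (A * homogeneousComponent i z)
      = if i = s then A * homogeneousComponent i z else 0 := by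
    intro i
    have h : (A * homogeneousComponent i z) ∈ homogeneousSubmodule (Fin m) K (d + i) :=
      (mem_homogeneousSubmodule _ _).mpr (hA.mul (homogeneousComponent_isHomogeneous i z))
    rcases eq_or_ne i s with rfl | hi
    · rw [homogeneousComponent_of_mem h, if_pos (by omega), if_pos rfl]
    · rw [homogeneousComponent_of_mem h, if_neg (by omega), if_neg hi]
  rw [Finset.sum_congr rfl fun i _ => key i, Finset.sum_ite_eq' (Finset.range (z.totalDegree + 1))]
  by_cases hs : s ∈ Finset.range (z.totalDegree + 1)
  · rw [if_pos hs]
  · rw [if_neg hs, homogeneousComponent_eq_zero, mul_zero]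
    simpa using hs

private lemma aux_dim_eq {K : Type} [Field K] {m : ℕ} (I J : Ideal (MvPolynomial (Fin m) K))
    (hI : IsHomogeneousIdeal I) (hJ : IsHomogeneousIdeal J) (hIJ : I ≤ J)
    {d : ℕ} (A : MvPolynomial (Fin m) K) (hA : A ∈ homogeneousSubmodule (Fin m) K d)
    (hA0 : A ≠ 0) (hcol : I.colon (Ideal.span {A}) = I) (s : ℕ) :
    Module.finrank K (homogeneousSubmodule (Fin m) K (s + d) ⊓
        Submodule.restrictScalars K (I ⊔ Ideal.span {A} * J) :
        Submodule K (MvPolynomial (Fin m) K)) +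
      Module.finrank K (homogeneousSubmodule (Fin m) K s ⊓ Submodule.restrictScalars K I :
        Submodule K (MvPolynomial (Fin m) K)) =
    Module.finrank K (homogeneousSubmodule (Fin m) K (s + d) ⊓ Submodule.restrictScalars K I :
        Submodule K (MvPolynomial (Fin m) K)) +
      Module.finrank K (homogeneousSubmodule (Fin m) K s ⊓ Submodule.restrictScalars K J :
        Submodule K (MvPolynomial (Fin m) K)) := by
  classical
  set V1 := homogeneousSubmodule (Fin m) K (s + d) with hV1
  set V0 := homogeneousSubmodule (Fin m) K s with hV0
  have hAh : A.IsHomogeneous d := (mem_homogeneousSubmodule _ _).mp hA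
  set μ : MvPolynomial (Fin m) K →ₗ[K] MvPolynomial (Fin m) K := LinearMap.mulLeft K A with hμ
  have hinj : Function.Injective μ := by
    intro x y hxy
    have : A * x = A * y := hxy
    exact mul_left_cancel₀ hA0 this
  haveI fd1 : FiniteDimensional K V1 := aux_hs_fd
  haveI fd0 : FiniteDimensional K V0 := aux_hs_fd
  set B1 : Submodule K (MvPolynomial (Fin m) K) := V1 ⊓ Submodule.restrictScalars K I with hB1
  set A2 : Submodule K (MvPolynomial (Fin m) K) := V0 ⊓ Submodule.restrictScalars K J with hA2
  set B2 : Submodule K (MvPolynomial (Fin m) K) := V0 ⊓ Submodule.restrictScalars K I with hB2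
  set C : Submodule K (MvPolynomial (Fin m) K) := Submodule.map μ A2 with hC
  set C' : Submodule K (MvPolynomial (Fin m) K) := Submodule.map μ B2 with hC'
  have hmemV1 : ∀ f ∈ V0, μ f ∈ V1 := by
    intro f hf
    have h2 : (A * f).IsHomogeneous (s + d) := by
      rw [add_comm s d]
      exact hAh.mul ((mem_homogeneousSubmodule _ _).mp hf)
    exact (mem_homogeneousSubmodule _ _).mpr h2
  have claim1 : V1 ⊓ Submodule.restrictScalars K (I ⊔ Ideal.span {A} * J) = B1 ⊔ C := by
    apply le_antisymm
    · intro x hx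
      obtain ⟨hxV, hxQ⟩ := Submodule.mem_inf.mp hx
      have hxQ' : x ∈ I ⊔ Ideal.span {A} * J := hxQ
      obtain ⟨q, hq, r, hr, hqr⟩ := Submodule.mem_sup.mp hxQ'
      obtain ⟨z, hz, hAz⟩ := Ideal.mem_span_singleton_mul.mp hr
      have hx1 : homogeneousComponent (s + d) x = x := by
        rw [homogeneousComponent_of_mem hxV, if_pos rfl]
      have hx2 : x = homogeneousComponent (s + d) q + A * homogeneousComponent s z := by
        conv_lhs => rw [← hx1, ← hqr]
        rw [map_add, ← hAz, aux_hc_mul A z hAh s]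
      rw [hx2]
      apply Submodule.add_mem_sup
      · exact Submodule.mem_inf.mpr ⟨homogeneousComponent_mem _ _, hI q hq _⟩
      · exact Submodule.mem_map.mpr
          ⟨homogeneousComponent s z,
            Submodule.mem_inf.mpr ⟨homogeneousComponent_mem _ _, hJ z hz s⟩, rfl⟩
    · apply sup_le
      · exact le_inf inf_le_left
          (le_trans inf_le_right fun x hx => Submodule.mem_sup_left hx)
      · intro x hx
        obtain ⟨f, hf, rfl⟩ := Submodule.mem_map.mp hx
        obtain ⟨hfV, hfJ⟩ := Submodule.mem_inf.mp hf
        refine Submodule.mem_inf.mpr ⟨hmemV1 f hfV, ?_⟩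
        exact Submodule.mem_sup_right
          (Ideal.mul_mem_mul (Ideal.mem_span_singleton_self A) hfJ)
  have claim2 : B1 ⊓ C = C' := by
    apply le_antisymm
    · intro x hx
      obtain ⟨hxB, hxC⟩ := Submodule.mem_inf.mp hx
      obtain ⟨hxV, hxI⟩ := Submodule.mem_inf.mp hxB
      obtain ⟨f, hf, rfl⟩ := Submodule.mem_map.mp hxC
      obtain ⟨hfV, hfJ⟩ := Submodule.mem_inf.mp hf
      have hAf : f * A ∈ I := by
        have : A * f ∈ I := hxI
        rwa [mul_comm] at this
      have hfI : f ∈ I := by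
        rw [← hcol]
        exact Ideal.mem_colon_span_singleton.mpr hAf
      exact Submodule.mem_map.mpr ⟨f, Submodule.mem_inf.mpr ⟨hfV, hfI⟩, rfl⟩
    · apply le_inf
      · intro x hx
        obtain ⟨f, hf, rfl⟩ := Submodule.mem_map.mp hx
        obtain ⟨hfV, hfI⟩ := Submodule.mem_inf.mp hf
        refine Submodule.mem_inf.mpr ⟨hmemV1 f hfV, ?_⟩
        exact Ideal.mul_mem_left _ A hfI
      · exact Submodule.map_mono (inf_le_inf_left _ fun x hx => hIJ hx)
  haveI : FiniteDimensional K B1 := Submodule.finiteDimensional_of_le (inf_le_left : B1 ≤ V1)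
  haveI : FiniteDimensional K A2 := Submodule.finiteDimensional_of_le (inf_le_left : A2 ≤ V0)
  haveI : FiniteDimensional K B2 := Submodule.finiteDimensional_of_le (inf_le_left : B2 ≤ V0)
  haveI : FiniteDimensional K C := Module.Finite.map A2 μ
  have e2 : Module.finrank K A2 = Module.finrank K C :=
    (Submodule.equivMapOfInjective μ hinj A2).finrank_eq
  have e3 : Module.finrank K B2 = Module.finrank K C' :=
    (Submodule.equivMapOfInjective μ hinj B2).finrank_eq
  have e4 := Submodule.finrank_sup_add_finrank_inf_eq B1 C
  rw [claim2] at e4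
  rw [claim1]
  omega

private lemma aux_hilb_eq {K : Type} [Field K] {m : ℕ} (I J : Ideal (MvPolynomial (Fin m) K))
    (hI : IsHomogeneousIdeal I) (hJ : IsHomogeneousIdeal J) (hIJ : I ≤ J)
    {d : ℕ} (A : MvPolynomial (Fin m) K) (hA : A ∈ homogeneousSubmodule (Fin m) K d)
    (hA0 : A ≠ 0) (hcol : I.colon (Ideal.span {A}) = I) (s : ℕ) :
    (hilb (I ⊔ Ideal.span {A} * J) (s + d) : ℚ) =
      (hilb I (s + d) : ℚ) - (hilb I s : ℚ) + (hilb J s : ℚ) := by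
  have key := aux_dim_eq I J hI hJ hIJ A hA hA0 hcol s
  have cast : ∀ (Q : Ideal (MvPolynomial (Fin m) K)) (t : ℕ),
      (hilb Q t : ℚ) = (Module.finrank K (homogeneousSubmodule (Fin m) K t) : ℚ) -
        (Module.finrank K (homogeneousSubmodule (Fin m) K t ⊓ Submodule.restrictScalars K Q :
          Submodule K (MvPolynomial (Fin m) K)) : ℚ) := by
    intro Q t
    haveI : FiniteDimensional K (homogeneousSubmodule (Fin m) K t) := aux_hs_fd
    have hle : Module.finrank K (homogeneousSubmodule (Fin m) K t ⊓
          Submodule.restrictScalars K Q : Submodule K (MvPolynomial (Fin m) K)) ≤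
        Module.finrank K (homogeneousSubmodule (Fin m) K t) :=
      Submodule.finrank_mono inf_le_left
    rw [hilb, Nat.cast_sub hle]
  rw [cast, cast, cast, cast]
  have keyQ : (Module.finrank K (homogeneousSubmodule (Fin m) K (s + d) ⊓
        Submodule.restrictScalars K (I ⊔ Ideal.span {A} * J) :
        Submodule K (MvPolynomial (Fin m) K)) : ℚ) +
      (Module.finrank K (homogeneousSubmodule (Fin m) K s ⊓ Submodule.restrictScalars K I :
        Submodule K (MvPolynomial (Fin m) K)) : ℚ) =
      (Module.finrank K (homogeneousSubmodule (Fin m) K (s + d) ⊓ Submodule.restrictScalars K I :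
        Submodule K (MvPolynomial (Fin m) K)) : ℚ) +
      (Module.finrank K (homogeneousSubmodule (Fin m) K s ⊓ Submodule.restrictScalars K J :
        Submodule K (MvPolynomial (Fin m) K)) : ℚ) := by
    exact_mod_cast key
  linarith

end AuxBDL

/-- the degree formula `deg(I + A·J) = d·deg I + deg J` for a basic double
G-link, expressed via Hilbert polynomials (the multiplicity is the leading coefficient
times the factorial of the degree of the Hilbert polynomial). -/
theorem basic_double_link_degree {K : Type} [Field K] {n : ℕ} (d : ℕ) (hd : 0 < d)
    (I J : Ideal (MvPolynomial (Fin (n + 1)) K))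
    (hI : IsHomogeneousIdeal I) (hJ : IsHomogeneousIdeal J) (hIJ : I ≤ J)
    (A : MvPolynomial (Fin (n + 1)) K)
    (hA : A ∈ homogeneousSubmodule (Fin (n + 1)) K d)
    (hcol : I.colon (Ideal.span {A}) = I)
    (P₁ P₂ P₃ : Polynomial ℚ)
    (hP₁ : ∃ N : ℕ, ∀ t : ℕ, N ≤ t → (hilb I t : ℚ) = P₁.eval (t : ℚ))
    (hP₂ : ∃ N : ℕ, ∀ t : ℕ, N ≤ t → (hilb J t : ℚ) = P₂.eval (t : ℚ))
    (hP₃ : ∃ N : ℕ, ∀ t : ℕ, N ≤ t →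
      (hilb (I ⊔ Ideal.span {A} * J) t : ℚ) = P₃.eval (t : ℚ))
    (hP₂ne : P₂ ≠ 0)
    (hcodim : P₂.natDegree + 1 = P₁.natDegree) :
    P₃.natDegree = P₂.natDegree ∧
      P₃.leadingCoeff * (Nat.factorial P₃.natDegree : ℚ) =
        (d : ℚ) * (P₁.leadingCoeff * (Nat.factorial P₁.natDegree : ℚ)) +
          P₂.leadingCoeff * (Nat.factorial P₂.natDegree : ℚ) := by
  classical
  obtain ⟨N₁, h₁⟩ := hP₁
  obtain ⟨N₂, h₂⟩ := hP₂
  obtain ⟨N₃, h₃⟩ := hP₃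
  by_cases hA0 : A = 0
  · exfalso
    apply hP₂ne
    have hIt : I = ⊤ := by
      rw [← hcol, Ideal.eq_top_iff_one]
      subst hA0
      exact Ideal.mem_colon_span_singleton.mpr (by simp)
    have hJt : J = ⊤ := eq_top_iff.mpr (hIt ▸ hIJ)
    have hh : ∀ t : ℕ, hilb J t = 0 := by
      intro t
      rw [hJt, hilb]
      have : Submodule.restrictScalars K (⊤ : Ideal (MvPolynomial (Fin (n + 1)) K)) =
          (⊤ : Submodule K (MvPolynomial (Fin (n + 1)) K)) := rfl
      rw [this, inf_top_eq, Nat.sub_self]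
    apply aux_poly_eq_zero P₂ N₂
    intro t ht
    rw [← h₂ t ht, hh t, Nat.cast_zero]
  · set e := P₂.natDegree with he
    set c : ℚ := (d : ℚ) with hc
    set Q : Polynomial ℚ :=
      P₁ - P₁.comp (Polynomial.X - Polynomial.C c) + P₂.comp (Polynomial.X - Polynomial.C c)
      with hQdef
    have hP₁ne : P₁ ≠ 0 := by
      intro h0
      rw [h0, Polynomial.natDegree_zero] at hcodim
      omega
    have hl₁ : 0 < P₁.leadingCoeff :=
      aux_pos_lead P₁ hP₁ne N₁ fun t ht => by rw [← h₁ t ht]; exact Nat.cast_nonneg _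
    have hl₂ : 0 < P₂.leadingCoeff :=
      aux_pos_lead P₂ hP₂ne N₂ fun t ht => by rw [← h₂ t ht]; exact Nat.cast_nonneg _
    have hdeg1 : (P₁.comp (Polynomial.X - Polynomial.C c)).natDegree = P₁.natDegree := by
      rw [Polynomial.natDegree_comp, Polynomial.natDegree_X_sub_C, mul_one]
    have hdeg2 : (P₂.comp (Polynomial.X - Polynomial.C c)).natDegree = e := by
      rw [Polynomial.natDegree_comp, Polynomial.natDegree_X_sub_C, mul_one]
    have hQhigh : ∀ k, e < k → Q.coeff k = 0 := by
      intro k hk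
      rw [hQdef, Polynomial.coeff_add, Polynomial.coeff_sub]
      have hc2 : (P₂.comp (Polynomial.X - Polynomial.C c)).coeff k = 0 :=
        Polynomial.coeff_eq_zero_of_natDegree_lt (by omega)
      rcases eq_or_lt_of_le (Nat.succ_le_of_lt hk) with hke | hke
      · have hk1 : k = P₁.natDegree := by omega
        have ha : P₁.coeff k = P₁.leadingCoeff := by rw [Polynomial.leadingCoeff, hk1]
        have hb : (P₁.comp (Polynomial.X - Polynomial.C c)).coeff k = P₁.leadingCoeff := by
          have hlc : (P₁.comp (Polynomial.X - Polynomial.C c)).leadingCoeff =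
              P₁.leadingCoeff := by
            rw [Polynomial.leadingCoeff_comp (by rw [Polynomial.natDegree_X_sub_C]; omega),
              (Polynomial.monic_X_sub_C c).leadingCoeff, one_pow, mul_one]
          rw [← hlc, Polynomial.leadingCoeff, hdeg1, hk1]
        rw [ha, hb, hc2]
        ring
      · have ha : P₁.coeff k = 0 := Polynomial.coeff_eq_zero_of_natDegree_lt (by omega)
        have hb : (P₁.comp (Polynomial.X - Polynomial.C c)).coeff k = 0 :=
          Polynomial.coeff_eq_zero_of_natDegree_lt (by omega)
        rw [ha, hb, hc2]
        ring
    have hsum : ∀ P : Polynomial ℚ, P.natDegree = e →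
        (P.comp (Polynomial.X - Polynomial.C c)).coeff e = P.coeff e := by
      intro P hP
      rw [aux_coeff_comp, hP]
      rw [Finset.sum_eq_single_of_mem e (Finset.self_mem_range_succ e)]
      · simp
      · intro i hi hne
        have hilt : i < e := lt_of_le_of_ne (Nat.lt_succ_iff.mp (Finset.mem_range.mp hi)) hne
        rw [Nat.choose_eq_zero_of_lt hilt]
        push_cast
        ring
    have hQe : Q.coeff e = c * (e + 1) * P₁.leadingCoeff + P₂.leadingCoeff := by
      have hcomp1 : (P₁.comp (Polynomial.X - Polynomial.C c)).coeff e =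
          P₁.coeff e + P₁.leadingCoeff * (-c) * (e + 1) := by
        rw [aux_coeff_comp, ← hcodim, Finset.sum_range_succ]
        have hinner : ∑ i ∈ Finset.range (e + 1),
            P₁.coeff i * ((-c) ^ (i - e) * (i.choose e : ℚ)) = P₁.coeff e := by
          rw [Finset.sum_eq_single_of_mem e (Finset.self_mem_range_succ e)]
          · simp
          · intro i hi hne
            have hilt : i < e := lt_of_le_of_ne (Nat.lt_succ_iff.mp (Finset.mem_range.mp hi)) hne
            rw [Nat.choose_eq_zero_of_lt hilt]
            push_cast
            ring
        rw [hinner]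
        have h1 : e + 1 - e = 1 := by omega
        have h2 : (e + 1).choose e = e + 1 := Nat.choose_succ_self_right e
        have h3 : P₁.coeff (e + 1) = P₁.leadingCoeff := by
          rw [Polynomial.leadingCoeff, ← hcodim]
        rw [h1, h2, h3, pow_one]
        push_cast
        ring
      rw [hQdef, Polynomial.coeff_add, Polynomial.coeff_sub, hcomp1, hsum P₂ rfl,
        show P₂.leadingCoeff = P₂.coeff e from rfl]
      ring
    have hcpos : 0 < c := by
      rw [hc]
      exact_mod_cast hd
    have hQepos : 0 < Q.coeff e := by
      rw [hQe]
      have h5 : (0 : ℚ) < c * (e + 1) * P₁.leadingCoeff := by positivity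
      linarith
    have hQdeg : Q.natDegree = e :=
      le_antisymm (Polynomial.natDegree_le_iff_coeff_eq_zero.mpr fun k hk => hQhigh k hk)
        (Polynomial.le_natDegree_of_ne_zero (ne_of_gt hQepos))
    have hPQ : P₃ = Q := by
      have hzero : P₃ - Q = 0 := by
        apply aux_poly_eq_zero _ (N₁ + N₂ + N₃ + d)
        intro t ht
        have htd : d ≤ t := by omega
        set s := t - d with hs
        have hts : t = s + d := by omega
        have key := aux_hilb_eq I J hI hJ hIJ A hA hA0 hcol s
        rw [← hts] at key
        have h1t : (hilb I t : ℚ) = P₁.eval (t : ℚ) := h₁ t (by omega)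
        have h1s : (hilb I s : ℚ) = P₁.eval (s : ℚ) := h₁ s (by omega)
        have h2s : (hilb J s : ℚ) = P₂.eval (s : ℚ) := h₂ s (by omega)
        have h3t : (hilb (I ⊔ Ideal.span {A} * J) t : ℚ) = P₃.eval (t : ℚ) := h₃ t (by omega)
        have hcast : (t : ℚ) - c = (s : ℚ) := by
          rw [hc, hts]
          push_cast
          ring
        have hQev : Q.eval (t : ℚ) =
            P₁.eval (t : ℚ) - P₁.eval ((s : ℚ)) + P₂.eval ((s : ℚ)) := by
          rw [hQdef]
          simp only [Polynomial.eval_add, Polynomial.eval_sub, Polynomial.eval_comp,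
            Polynomial.eval_X, Polynomial.eval_C, hcast]
        rw [Polynomial.eval_sub, hQev, ← h3t, key, h1t, h1s, h2s]
        ring
      have := sub_eq_zero.mp hzero
      exact this
    constructor
    · rw [hPQ, hQdeg]
    · have hQlead : Q.leadingCoeff = Q.coeff e := by rw [Polynomial.leadingCoeff, hQdeg]
      rw [hPQ, hQdeg, hQlead, hQe, ← hcodim]
      rw [Nat.factorial_succ]
      push_cast
      ring
end
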